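/- arXiv:1709.01670 — 3 statements merged into one kernel-verified Lean document; each statement's English description precedes it below -/
import Mathlib

section
/- (Brucker et al.) For every instance with m ≥ 1 machines and n jobs, each job j having a release date r_j ∈ ℕ, a due date d_j ∈ ℕ, and a weight w_j ∈ ℕ, the minimum weighted number of tardy jobs in the unit-time open shop problem equals the minimum weighted number of tardy jobs in the corresponding parallel-machine problem with integer preemption: min over feasible unit-time open shop schedules t of Σ_j w_j·U_j(t) = min over feasible parallel-machine slot assignments (T_1,…,T_n) of Σ_j w_j·U_j(T). -/
/-- A feasible unit-time open shop schedule (`O|p_ij=1,r_j|Σ w_j U_j`): `t i j` is the time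
slot in which machine `i` processes job `j`; it respects release dates, each machine
processes at most one job per slot, and each job is processed by at most one machine
per slot. -/
def UnitOSFeasible (m n : ℕ) (r : Fin n → ℕ) (t : Fin m → Fin n → ℕ) : Prop :=
  (∀ (i : Fin m) (j : Fin n), r j ≤ t i j) ∧
  (∀ i : Fin m, ∀ j j' : Fin n, j ≠ j' → t i j ≠ t i j') ∧
  (∀ j : Fin n, ∀ i i' : Fin m, i ≠ i' → t i j ≠ t i' j)

/-- The weighted number of tardy jobs of a unit-time open shop schedule,
where job `j` completes at time `1 + max_i t i j`. -/
def UnitOSCost (m n : ℕ) (d w : Fin n → ℕ) (t : Fin m → Fin n → ℕ) : ℕ :=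
  ∑ j : Fin n, if d j < 1 + Finset.univ.sup (fun i : Fin m => t i j) then w j else 0

/-- A feasible slot assignment for `P|p_j=m,pmtn_ℤ,r_j|Σ w_j U_j`: each job `j` gets a set
`T j` of exactly `m` distinct unit time slots, all at least `r j`, and each time slot is
used by at most `m` jobs. -/
def PmtnFeasible (m n : ℕ) (r : Fin n → ℕ) (T : Fin n → Finset ℕ) : Prop :=
  (∀ j : Fin n, (T j).card = m) ∧
  (∀ j : Fin n, ∀ x ∈ T j, r j ≤ x) ∧
  (∀ τ : ℕ, (Finset.univ.filter fun j : Fin n => τ ∈ T j).card ≤ m)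

/-- The weighted number of tardy jobs of a slot assignment, where job `j` completes at
time `1 + max T j`. -/
def PmtnCost (n : ℕ) (d w : Fin n → ℕ) (T : Fin n → Finset ℕ) : ℕ :=
  ∑ j : Fin n, if d j < 1 + (T j).sup id then w j else 0

/-
A unit-time open shop schedule `t` yields the slot assignment `T j = {t i j | i}`, which is
feasible and has the same cost. Conversely, a feasible slot assignment is a bipartite graph
between jobs and slots in which every job has degree `m` and every slot degree at most `m`;
by König's edge-colouring theorem its edges split into `m` matchings, each saturating the jobs,
and matching `i` is the timetable of machine `i`. König's theorem goes by induction on `m`: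
Hall's theorem gives a matching that saturates the jobs and every slot of degree `m`, and
removing it leaves a graph of degree `m - 1`.
-/

open Finset Function

section Transversals

variable {ι α : Type*} [Fintype ι] [DecidableEq α] {T : ι → Finset α} {k : ℕ}

lemma card_le_card_biUnion_of_le_card (hk : 0 < k) (hT : ∀ j, k ≤ #(T j))
    (hdeg : ∀ a, #{j | a ∈ T j} ≤ k) (s : Finset ι) : #s ≤ #(s.biUnion T) := by
  refine Nat.le_of_mul_le_mul_right
    (card_mul_le_card_mul (fun j a => a ∈ T j) (fun j hj => ?_) (fun a _ => ?_)) hk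
  · rw [bipartiteAbove, filter_mem_eq_inter, inter_eq_right.2 (subset_biUnion_of_mem T hj)]
    exact hT j
  · exact (card_le_card (filter_subset_filter _ (subset_univ s))).trans (hdeg a)

lemma card_sdiff_biUnion_add_card_le (hk : 0 < k) (hT : ∀ j, #(T j) ≤ k) {F : Finset α}
    (hF : ∀ a ∈ F, k ≤ #{j | a ∈ T j}) (s : Finset ι) :
    #(F \ s.biUnion T) + #s ≤ Fintype.card ι := by
  classical
  have key : #(F \ s.biUnion T) * k ≤ #(univ \ s) * k := by
    refine card_mul_le_card_mul (fun a j => a ∈ T j) (fun a ha => ?_) (fun j _ => ?_)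
    · obtain ⟨haF, haU⟩ := mem_sdiff.1 ha
      refine (hF a haF).trans (card_le_card fun j hj => ?_)
      have haj : a ∈ T j := (mem_filter.1 hj).2
      have hjs : j ∉ s := fun hjs => haU (mem_biUnion.2 ⟨j, hjs, haj⟩)
      exact mem_filter.2 ⟨mem_sdiff.2 ⟨mem_univ j, hjs⟩, haj⟩
    · exact (card_le_card fun a ha => (mem_filter.1 ha).2).trans (hT j)
  rw [card_univ_sdiff] at key
  have := Nat.le_of_mul_le_mul_right key hk
  have := card_le_univ s
  omega

lemma card_le_card_biUnion_sumElim (hk : 0 < k) (hT : ∀ j, #(T j) = k)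
    (hdeg : ∀ a, #{j | a ∈ T j} ≤ k) {R F : Finset α} (hF : ∀ a ∈ F, k ≤ #{j | a ∈ T j})
    (s : Finset (ι ⊕ Fin (#R - Fintype.card ι))) :
    #s ≤ #(s.biUnion (Sum.elim T fun _ => R \ F)) := by
  have hsplit := card_toLeft_add_card_toRight (u := s)
  have hU : s.toLeft.biUnion T ⊆ s.biUnion (Sum.elim T fun _ => R \ F) := fun a ha => by
    obtain ⟨j, hj, haj⟩ := mem_biUnion.1 ha
    exact mem_biUnion.2 ⟨.inl j, mem_toLeft.1 hj, haj⟩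
  rcases s.toRight.eq_empty_or_nonempty with hempty | ⟨i, hi⟩
  · rw [hempty, card_empty] at hsplit
    have := card_le_card_biUnion_of_le_card hk (fun j => (hT j).ge) hdeg s.toLeft
    have := card_le_card hU
    omega
  · -- a slot of `R` missed by the union is a full slot not adjacent to `s.toLeft`
    have hsub : R \ (F \ s.toLeft.biUnion T) ⊆ s.biUnion (Sum.elim T fun _ => R \ F) := by
      intro a ha
      obtain ⟨haR, haFU⟩ := mem_sdiff.1 ha
      by_cases haF : a ∈ F
      · exact hU (by_contra fun haU => haFU (mem_sdiff.2 ⟨haF, haU⟩))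
      · exact mem_biUnion.2 ⟨.inr i, mem_toRight.1 hi, mem_sdiff.2 ⟨haR, haF⟩⟩
    have h₁ := card_sdiff_biUnion_add_card_le hk (fun j => (hT j).le) hF s.toLeft
    have h₂ := le_card_sdiff (F \ s.toLeft.biUnion T) R
    have h₃ := card_le_card hsub
    have h₄ : #s.toRight ≤ #R - Fintype.card ι := by simpa using card_le_univ s.toRight
    have h₅ := card_pos.2 ⟨i, hi⟩
    omega

lemma exists_transversal_covering_full (hk : 0 < k) (hT : ∀ j, #(T j) = k)
    (hdeg : ∀ a, #{j | a ∈ T j} ≤ k) :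
    ∃ φ : ι → α, Injective φ ∧ (∀ j, φ j ∈ T j) ∧
      ∀ a, #{j | a ∈ T j} = k → a ∈ Set.range φ := by
  -- Pad `T` with `#R - card ι` copies of the non-full slots: a Hall transversal of the padded
  -- family fills all of `R`, so every full slot is hit by a genuine member of `T`.
  set R := univ.biUnion T
  set F := R.filter fun a => #{j | a ∈ T j} = k
  obtain ⟨f, hf, hfA⟩ := (all_card_le_biUnion_card_iff_exists_injective _).1
    (card_le_card_biUnion_sumElim (R := R) hk hT hdeg (F := F) fun a ha => (mem_filter.1 ha).2.ge)
  refine ⟨f ∘ Sum.inl, hf.comp Sum.inl_injective, fun j => hfA (.inl j), fun a ha => ?_⟩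
  have hR : univ.image f = R := by
    refine eq_of_subset_of_card_le (fun b hb => ?_) ?_
    · obtain ⟨x, -, rfl⟩ := mem_image.1 hb
      cases x with
      | inl j => exact mem_biUnion.2 ⟨j, mem_univ j, hfA (.inl j)⟩
      | inr i => exact (mem_sdiff.1 (hfA (.inr i))).1
    · have := card_le_card_biUnion_of_le_card hk (fun j => (hT j).ge) hdeg univ
      rw [card_image_of_injective _ hf, card_univ, Fintype.card_sum, Fintype.card_fin]
      rw [card_univ] at this
      omega
  have haR : a ∈ R := by
    obtain ⟨j, hj⟩ := card_pos.1 (ha.symm ▸ hk)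
    exact mem_biUnion.2 ⟨j, mem_univ j, (mem_filter.1 hj).2⟩
  obtain ⟨x, -, hx⟩ := mem_image.1 (hR ▸ haR)
  cases x with
  | inl j => exact ⟨j, hx⟩
  | inr i => exact absurd (mem_filter.2 ⟨haR, ha⟩) (hx ▸ (mem_sdiff.1 (hfA (.inr i))).2)

lemma card_filter_mem_erase_le {φ : ι → α} (hdeg : ∀ a, #{j | a ∈ T j} ≤ k)
    (hφ : ∀ j, φ j ∈ T j) (hcover : ∀ a, #{j | a ∈ T j} = k → a ∈ Set.range φ) (a : α) :
    #{j | a ∈ (T j).erase (φ j)} ≤ k - 1 := by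
  classical
  have hsub : ({j | a ∈ (T j).erase (φ j)} : Finset ι) ⊆ ({j | a ∈ T j} : Finset ι) :=
    fun j hj => mem_filter.2 ⟨mem_univ j, mem_of_mem_erase (mem_filter.1 hj).2⟩
  by_cases hfull : #{j | a ∈ T j} = k
  · obtain ⟨j₀, rfl⟩ := hcover a hfull
    have hj₀ : j₀ ∈ ({j | φ j₀ ∈ T j} : Finset ι) := mem_filter.2 ⟨mem_univ j₀, hφ j₀⟩
    calc #{j | φ j₀ ∈ (T j).erase (φ j)}
        ≤ #(({j | φ j₀ ∈ T j} : Finset ι).erase j₀) := card_le_card fun j hj =>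
          mem_erase.2 ⟨by rintro rfl; simp at hj, hsub hj⟩
      _ = k - 1 := by rw [card_erase_of_mem hj₀, hfull]
  · exact (card_le_card hsub).trans (by have := hdeg a; omega)

theorem exists_disjoint_transversals (hT : ∀ j, #(T j) = k) (hdeg : ∀ a, #{j | a ∈ T j} ≤ k) :
    ∃ t : Fin k → ι → α, (∀ i j, t i j ∈ T j) ∧ (∀ i, Injective (t i)) ∧
      ∀ j, Injective fun i => t i j := by
  induction k generalizing T with
  | zero => exact ⟨finZeroElim, finZeroElim, finZeroElim, fun _ => injective_of_subsingleton _⟩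
  | succ k ih =>
    obtain ⟨φ, hφinj, hφ, hcover⟩ := exists_transversal_covering_full k.succ_pos hT hdeg
    obtain ⟨t, ht, htinj, htcol⟩ := ih (T := fun j => (T j).erase (φ j))
      (fun j => by rw [card_erase_of_mem (hφ j), hT, Nat.add_sub_cancel])
      (card_filter_mem_erase_le hdeg hφ hcover)
    refine ⟨Fin.cons φ t, fun i j => Fin.cases (hφ j) (fun i => mem_of_mem_erase (ht i j)) i,
      fun i => Fin.cases hφinj htinj i, fun j => ?_⟩
    have hcol : (fun i => (Fin.cons φ t : Fin (k + 1) → ι → α) i j) =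
        Fin.cons (φ j) fun i => t i j :=
      funext (Fin.cases rfl fun _ => rfl)
    rw [hcol, Fin.cons_injective_iff]
    refine ⟨?_, htcol j⟩
    rintro ⟨i, hi⟩
    exact notMem_erase (φ j) (T j) (hi ▸ ht i j)

end Transversals

section Scheduling

variable {m n : ℕ} {r : Fin n → ℕ}

lemma UnitOSFeasible.injective_col {t : Fin m → Fin n → ℕ} (ht : UnitOSFeasible m n r t)
    (j : Fin n) : Injective fun i => t i j :=
  fun _ _ => not_imp_not.1 (ht.2.2 j _ _)

lemma UnitOSFeasible.pmtnFeasible_image {t : Fin m → Fin n → ℕ} (ht : UnitOSFeasible m n r t) :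
    PmtnFeasible m n r fun j => univ.image fun i => t i j := by
  refine ⟨fun j => ?_, fun j x hx => ?_, fun τ => ?_⟩
  · rw [card_image_of_injective _ (ht.injective_col j), card_univ, Fintype.card_fin]
  · obtain ⟨i, -, rfl⟩ := mem_image.1 hx
    exact ht.1 i j
  · have hsub : ({j | τ ∈ univ.image fun i => t i j} : Finset (Fin n)) ⊆
        univ.biUnion fun i => {j | t i j = τ} := fun j hj => by
      obtain ⟨i, -, hi⟩ := mem_image.1 (mem_filter.1 hj).2
      exact mem_biUnion.2 ⟨i, mem_univ i, mem_filter.2 ⟨mem_univ j, hi⟩⟩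
    refine (card_le_card hsub).trans ((card_biUnion_le_card_mul _ _ 1 fun i _ => ?_).trans ?_)
    · refine card_le_one.2 fun j hj j' hj' => by_contra fun hne => ht.2.1 i j j' hne ?_
      exact (mem_filter.1 hj).2.trans (mem_filter.1 hj').2.symm
    · simp

lemma PmtnFeasible.exists_unitOSFeasible {T : Fin n → Finset ℕ} (hT : PmtnFeasible m n r T) :
    ∃ t, UnitOSFeasible m n r t ∧ ∀ j, univ.image (fun i => t i j) = T j := by
  obtain ⟨t, ht, hrow, hcol⟩ := exists_disjoint_transversals hT.1 hT.2.2
  refine ⟨t, ⟨fun i j => hT.2.1 j _ (ht i j), fun i j j' hne h => hne (hrow i h),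
    fun j i i' hne h => hne (hcol j h)⟩, fun j => eq_of_subset_of_card_le ?_ ?_⟩
  · intro x hx
    obtain ⟨i, -, rfl⟩ := mem_image.1 hx
    exact ht i j
  · rw [card_image_of_injective _ (hcol j), card_univ, Fintype.card_fin, hT.1 j]

lemma unitOSCost_eq_pmtnCost_image (d w : Fin n → ℕ) (t : Fin m → Fin n → ℕ) :
    UnitOSCost m n d w t = PmtnCost n d w fun j => univ.image fun i => t i j := by
  simp only [UnitOSCost, PmtnCost, sup_image]
  rfl

end Scheduling

theorem unitOpenShop_eq_pmtnParallel_general (m n : ℕ) (r d w : Fin n → ℕ) :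
    sInf {v : ℕ | ∃ t : Fin m → Fin n → ℕ, UnitOSFeasible m n r t ∧ UnitOSCost m n d w t = v}
      = sInf {v : ℕ | ∃ T : Fin n → Finset ℕ, PmtnFeasible m n r T ∧ PmtnCost n d w T = v} := by
  congr 1
  ext v
  constructor
  · rintro ⟨t, ht, rfl⟩
    exact ⟨_, ht.pmtnFeasible_image, (unitOSCost_eq_pmtnCost_image d w t).symm⟩
  · rintro ⟨T, hT, rfl⟩
    obtain ⟨t, ht, himage⟩ := hT.exists_unitOSFeasible
    exact ⟨t, ht, by rw [unitOSCost_eq_pmtnCost_image, funext himage]⟩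

/-- (Brucker et al.) The minimum weighted number of tardy jobs in the unit-time open shop
problem `O|p_ij=1,r_j|Σ w_j U_j` equals the minimum weighted number of tardy jobs in the
parallel-machine problem with integer preemption `P|p_j=m,pmtn_ℤ,r_j|Σ w_j U_j`. -/
theorem unitOpenShop_eq_pmtnParallel (m n : ℕ) (hm : 1 ≤ m) (r d w : Fin n → ℕ) :
    sInf {v : ℕ | ∃ t : Fin m → Fin n → ℕ, UnitOSFeasible m n r t ∧ UnitOSCost m n d w t = v}
      = sInf {v : ℕ | ∃ T : Fin n → Finset ℕ, PmtnFeasible m n r T ∧ PmtnCost n d w T = v} :=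
  unitOpenShop_eq_pmtnParallel_general m n r d w
end

section
/- For minimizing the weighted number of tardy jobs for n jobs with a common processing time p ≥ 1 on m ≥ 1 parallel identical machines (P|p_j=p|Σw_jU_j), the minimum of Σ_j w_j·U_j over all feasible schedules equals the minimum over all bijections σ : {1,…,n} → {1,…,n} of Σ_{k=1}^n w_{σ(k)} · [ p·⌈k/m⌉ > d_{σ(k)} ]; in particular, there is an optimal schedule in which the job completed k-th (in order of completion) finishes exactly at time p·⌈k/m⌉. -/
/-- A feasible schedule on `m` parallel identical machines for `n` jobs of common
processing time `p`: job `j` is processed on machine `μ j` starting at time `s j`, and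
the processing intervals `[s j, s j + p)` of distinct jobs on the same machine are
pairwise disjoint. -/
def PMFeasible (m n p : ℕ) (μ : Fin n → Fin m) (s : Fin n → ℕ) : Prop :=
  ∀ j j' : Fin n, j ≠ j' → μ j = μ j' →
    Disjoint (Set.Ico (s j) (s j + p)) (Set.Ico (s j') (s j' + p))

/-- The weighted number of tardy jobs `Σ_j w_j · U_j` of a schedule, where job `j` is
tardy iff its completion time `s j + p` exceeds its due date `d j`. -/
def PMTardyCost (n p : ℕ) (d w : Fin n → ℕ) (s : Fin n → ℕ) : ℕ :=
  ∑ j : Fin n, if d j < s j + p then w j else 0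

/-- The weighted number of tardy jobs of the schedule induced by a permutation `σ`,
where the job `σ k` completed `(k+1)`-st finishes exactly at time `p·⌈(k+1)/m⌉`
(note `⌈(k+1)/m⌉ = (k + m) / m` for natural division, since `m ≥ 1`). -/
def PermTardyCost (m n p : ℕ) (d w : Fin n → ℕ) (σ : Equiv.Perm (Fin n)) : ℕ :=
  ∑ k : Fin n, if d (σ k) < p * ((k.1 + m) / m) then w (σ k) else 0

/-!
A permutation `σ` is realised by the schedule that runs the job `σ k` on machine `k mod m`
during `[p ⌊k/m⌋, p ⌊k/m⌋ + p)`, whose cost is exactly `PermTardyCost σ`. Conversely, list the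
jobs of a feasible schedule by start time. Among the first `k + 1` of them some machine carries
at least `⌊k/m⌋ + 1`, and jobs on one machine finish at least `p` apart, so the `(k+1)`-st job
finishes no earlier than `p ⌈(k+1)/m⌉`. Hence that permutation has no more tardy weight than the
schedule.
-/

open Finset

theorem add_le_of_disjoint_Ico {a b p : ℕ}
    (h : Disjoint (Set.Ico a (a + p)) (Set.Ico b (b + p))) (hab : a ≤ b) : a + p ≤ b := by
  have := Set.Ico_disjoint_Ico.mp h
  omega

theorem disjoint_Ico_mul {p q q' : ℕ} (h : q ≠ q') :
    Disjoint (Set.Ico (p * q) (p * q + p)) (Set.Ico (p * q') (p * q' + p)) := by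
  rw [Set.Ico_disjoint_Ico]
  rcases h.lt_or_gt with h | h <;>
  · have := Nat.mul_le_mul_left p h
    rw [Nat.mul_succ] at this
    omega

theorem mul_card_le_of_pairwise_gap {ι : Type*} [DecidableEq ι] {p B : ℕ} (t : ι → ℕ)
    (J : Finset ι) (hgap : ∀ i ∈ J, ∀ j ∈ J, i ≠ j → t i ≤ t j → t i + p ≤ t j)
    (hB : ∀ i ∈ J, t i + p ≤ B) : p * #J ≤ B := by
  induction J using Finset.induction_on_max_value t generalizing B with
  | empty => simp
  | insert a J haJ hmax ih =>
    have hJ : p * #J ≤ t a := by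
      refine ih (fun i hi j hj => hgap i (mem_insert_of_mem hi) j (mem_insert_of_mem hj))
        fun i hi => hgap i (mem_insert_of_mem hi) a (mem_insert_self a J) ?_ (hmax i hi)
      rintro rfl
      exact haJ hi
    have ha := hB a (mem_insert_self a J)
    rw [card_insert_of_notMem haJ, Nat.mul_succ]
    omega

theorem Nat.sInf_eq_of_subset_of_forall_exists_le {S T : Set ℕ} (hT : T.Nonempty)
    (hTS : T ⊆ S) (hST : ∀ a ∈ S, ∃ b ∈ T, b ≤ a) : sInf S = sInf T := by
  refine le_antisymm (Nat.sInf_le (hTS (Nat.sInf_mem hT))) ?_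
  obtain ⟨b, hb, hba⟩ := hST _ (Nat.sInf_mem (hT.mono hTS))
  exact (Nat.sInf_le hb).trans hba

variable {m n p : ℕ}

theorem PMTardyCost_eq_sum_perm (d w s : Fin n → ℕ) (σ : Equiv.Perm (Fin n)) :
    PMTardyCost n p d w s = ∑ k, if d (σ k) < s (σ k) + p then w (σ k) else 0 :=
  (Equiv.sum_comp σ fun j => if d j < s j + p then w j else 0).symm

namespace PMFeasible

variable {μ : Fin n → Fin m} {s : Fin n → ℕ}

theorem mul_card_le (hf : PMFeasible m n p μ s) {c : Fin m} {B : ℕ} (J : Finset (Fin n))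
    (hJ : ∀ j ∈ J, μ j = c) (hB : ∀ j ∈ J, s j + p ≤ B) : p * #J ≤ B :=
  mul_card_le_of_pairwise_gap s J
    (fun i hi j hj hij => add_le_of_disjoint_Ico (hf i j hij ((hJ i hi).trans (hJ j hj).symm)))
    hB

theorem mul_le_completion_sort (hf : PMFeasible m n p μ s) (k : Fin n) :
    p * (k / m + 1) ≤ s (Tuple.sort s k) + p := by
  set σ := Tuple.sort s
  obtain ⟨c, -, hc⟩ := exists_lt_card_fiber_of_mul_lt_card_of_maps_to
    (s := (Iic k).map σ.toEmbedding) (t := univ) (f := μ) (n := k / m)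
    (fun _ _ => mem_univ _)
    (by simpa using Nat.lt_succ_of_le (Nat.mul_div_le k m))
  refine (Nat.mul_le_mul_left p hc).trans (hf.mul_card_le _ (fun j hj => (mem_filter.mp hj).2) ?_)
  intro j hj
  obtain ⟨i, hik, rfl⟩ := mem_map.mp (mem_filter.mp hj).1
  exact Nat.add_le_add_right (Tuple.monotone_sort s (mem_Iic.mp hik)) p

end PMFeasible

theorem PermTardyCost_sort_le (hm : 0 < m) (d w : Fin n → ℕ) {μ : Fin n → Fin m}
    {s : Fin n → ℕ} (hf : PMFeasible m n p μ s) :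
    PermTardyCost m n p d w (Tuple.sort s) ≤ PMTardyCost n p d w s := by
  rw [PermTardyCost, PMTardyCost_eq_sum_perm d w s (Tuple.sort s)]
  refine sum_le_sum fun k _ => ?_
  have hk := hf.mul_le_completion_sort k
  rw [← Nat.add_div_right _ hm] at hk
  split_ifs <;> omega

theorem exists_feasible_PMTardyCost_eq_PermTardyCost (hm : 0 < m) (d w : Fin n → ℕ)
    (σ : Equiv.Perm (Fin n)) :
    ∃ (μ : Fin n → Fin m) (s : Fin n → ℕ),
      PMFeasible m n p μ s ∧ PMTardyCost n p d w s = PermTardyCost m n p d w σ := by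
  refine ⟨fun j => ⟨σ.symm j % m, Nat.mod_lt _ hm⟩, fun j => p * (σ.symm j / m), ?_, ?_⟩
  · intro j j' hjj' hμ
    have hr : σ.symm j % m = σ.symm j' % m := congrArg Fin.val hμ
    refine disjoint_Ico_mul fun hq => hjj' (σ.symm.injective (Fin.ext ?_))
    rw [← Nat.div_add_mod (σ.symm j : ℕ) m, ← Nat.div_add_mod (σ.symm j' : ℕ) m, hq, hr]
  · rw [PMTardyCost_eq_sum_perm d w _ σ, PermTardyCost]
    refine sum_congr rfl fun k _ => ?_
    rw [Equiv.symm_apply_apply, Nat.add_div_right _ hm, Nat.mul_succ]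

theorem parallelMachines_commonProcTime_weightedTardyJobs_general (m n p : ℕ) (hm : 1 ≤ m)
    (d w : Fin n → ℕ) :
    sInf {v : ℕ | ∃ (μ : Fin n → Fin m) (s : Fin n → ℕ),
          PMFeasible m n p μ s ∧ PMTardyCost n p d w s = v}
        = sInf {v : ℕ | ∃ σ : Equiv.Perm (Fin n), PermTardyCost m n p d w σ = v} ∧
      ∃ σ : Equiv.Perm (Fin n),
        PermTardyCost m n p d w σ
          = sInf {v : ℕ | ∃ (μ : Fin n → Fin m) (s : Fin n → ℕ),
              PMFeasible m n p μ s ∧ PMTardyCost n p d w s = v} := by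
  set schedCosts := {v : ℕ | ∃ (μ : Fin n → Fin m) (s : Fin n → ℕ),
    PMFeasible m n p μ s ∧ PMTardyCost n p d w s = v}
  set permCosts := {v : ℕ | ∃ σ : Equiv.Perm (Fin n), PermTardyCost m n p d w σ = v}
  have hPerm : permCosts.Nonempty := ⟨_, 1, rfl⟩
  have heq : sInf schedCosts = sInf permCosts := Nat.sInf_eq_of_subset_of_forall_exists_le hPerm
    (by
      rintro _ ⟨σ, rfl⟩
      exact exists_feasible_PMTardyCost_eq_PermTardyCost hm d w σ)
    (by
      rintro _ ⟨μ, s, hf, rfl⟩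
      exact ⟨_, ⟨Tuple.sort s, rfl⟩, PermTardyCost_sort_le hm d w hf⟩)
  obtain ⟨σ, hσ⟩ := Nat.sInf_mem hPerm
  exact ⟨heq, σ, hσ.trans heq.symm⟩

/-- For `P|p_j=p|Σ w_j U_j`, the minimum weighted number of tardy jobs over all feasible
schedules equals the minimum over all permutations `σ` of
`Σ_k w_{σ(k)} · [ p·⌈k/m⌉ > d_{σ(k)} ]`; in particular, some permutation schedule, in which
the job completed `k`-th finishes exactly at time `p·⌈k/m⌉`, is optimal. -/
theorem parallelMachines_commonProcTime_weightedTardyJobs (m n p : ℕ) (hm : 1 ≤ m)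
    (hp : 1 ≤ p) (d w : Fin n → ℕ) :
    sInf {v : ℕ | ∃ (μ : Fin n → Fin m) (s : Fin n → ℕ),
          PMFeasible m n p μ s ∧ PMTardyCost n p d w s = v}
        = sInf {v : ℕ | ∃ σ : Equiv.Perm (Fin n), PermTardyCost m n p d w σ = v} ∧
      ∃ σ : Equiv.Perm (Fin n),
        PermTardyCost m n p d w σ
          = sInf {v : ℕ | ∃ (μ : Fin n → Fin m) (s : Fin n → ℕ),
              PMFeasible m n p μ s ∧ PMTardyCost n p d w s = v} :=
  parallelMachines_commonProcTime_weightedTardyJobs_general m n p hm d w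
end

section
/- A finite set S of fixed-interval jobs, where job j must be processed exactly during the half-open interval [r_j, d_j), can be feasibly scheduled on m ≥ 1 parallel identical machines — that is, there exists an assignment f : S → {1,…,m} such that any two distinct jobs j, j' ∈ S with f(j) = f(j') have disjoint intervals [r_j, d_j) and [r_{j'}, d_{j'}) — if and only if for every time point t, the number of jobs j ∈ S with r_j ≤ t < d_j is at most m. -/
/-! Necessity: the jobs active at time `t` pairwise overlap, so a feasible assignment is injective
on them. Sufficiency is the greedy algorithm: insert the jobs by increasing release date; when `a` is
inserted, every earlier job still running at time `r a` blocks one machine, and since `a` itself is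
active at `r a` there are fewer than `m` of them, so some machine is free. An earlier job on that
machine has `r j ≤ r a` and is not running at `r a`, hence ends by `r a`. -/

open Finset Function

namespace FixedIntervalScheduling

variable {ι α M : Type*} [LinearOrder α]

def IsFeasible (r d : ι → α) (S : Set ι) (f : ι → M) : Prop :=
  S.Pairwise fun j j' => f j = f j' → Disjoint (Set.Ico (r j) (d j)) (Set.Ico (r j') (d j'))

def active (r d : ι → α) (S : Finset ι) (t : α) : Finset ι :=
  S.filter fun j => r j ≤ t ∧ t < d j

variable {r d : ι → α}

theorem active_mono {S T : Finset ι} (h : S ⊆ T) (t : α) : active r d S t ⊆ active r d T t :=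
  filter_subset_filter _ h

theorem card_active_le_of_isFeasible [Fintype M] {S : Finset ι} {f : ι → M}
    (hf : IsFeasible r d S f) (t : α) : #(active r d S t) ≤ Fintype.card M := by
  refine (card_le_card_of_injOn f (fun _ _ => mem_coe.2 (mem_univ _)) ?_).trans_eq card_univ
  intro j hj j' hj' hjj'
  obtain ⟨hjS, hjt⟩ := mem_filter.1 hj
  obtain ⟨hj'S, hj't⟩ := mem_filter.1 hj'
  by_contra hne
  exact Set.disjoint_left.1 (hf hjS hj'S hne hjj') hjt hj't

theorem IsFeasible.exists_update_insert [Fintype M] [DecidableEq ι] {s : Finset ι} {a : ι}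
    {f : ι → M} (hf : IsFeasible r d s f) (ha : a ∉ s) (hmax : ∀ j ∈ s, r j ≤ r a)
    (hcard : #(active r d s (r a)) < Fintype.card M) :
    ∃ c, IsFeasible r d (insert a s : Finset ι) (update f a c) := by
  classical
  obtain ⟨c, -, hc⟩ := exists_mem_notMem_of_card_lt_card
    ((card_image_le.trans_lt hcard).trans_eq card_univ.symm)
  have hne : ∀ j ∈ s, j ≠ a := fun j hj hja => ha (hja ▸ hj)
  have hdisj : ∀ j ∈ s, f j = c → Disjoint (Set.Ico (r a) (d a)) (Set.Ico (r j) (d j)) := by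
    intro j hj hjc
    have hend : d j ≤ r a := by
      by_contra! hlt
      exact hc (mem_image.2 ⟨j, mem_filter.2 ⟨hj, hmax j hj, hlt⟩, hjc⟩)
    exact Set.Ico_disjoint_Ico.2 (min_le_of_right_le (hend.trans (le_max_left _ _)))
  refine ⟨c, ?_⟩
  rw [IsFeasible, coe_insert]
  refine Set.Pairwise.insert (fun j hj j' hj' hjj' h => hf hj hj' hjj' ?_) ?_
  · rwa [update_of_ne (hne j hj), update_of_ne (hne j' hj')] at h
  · intro j hj _
    simp only [update_self, update_of_ne (hne j hj)]
    exact ⟨fun h => hdisj j hj h.symm, fun h => (hdisj j hj h).symm⟩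

theorem exists_isFeasible_of_card_active_le [Fintype M] [Nonempty M] [DecidableEq ι]
    (hrd : ∀ j, r j < d j) (S : Finset ι) (h : ∀ t, #(active r d S t) ≤ Fintype.card M) :
    ∃ f : ι → M, IsFeasible r d S f := by
  induction S using Finset.induction_on_max_value r with
  | empty => exact ⟨fun _ => Classical.arbitrary M, by simp [IsFeasible]⟩
  | insert a s ha hmax ih =>
    obtain ⟨f, hf⟩ := ih fun t => (card_le_card (active_mono (subset_insert a s) t)).trans (h t)
    have hcard : #(active r d (insert a s) (r a)) = #(active r d s (r a)) + 1 := by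
      rw [active, filter_insert, if_pos ⟨le_rfl, hrd a⟩, card_insert_of_notMem]
      · rfl
      · exact fun h => ha (mem_filter.1 h).1
    obtain ⟨c, hc⟩ := hf.exists_update_insert ha hmax (by have := h (r a); omega)
    exact ⟨_, hc⟩

end FixedIntervalScheduling

/-- Fixed-interval scheduling on `m` parallel identical machines: a finite set of jobs,
each job `j` occupying exactly the half-open interval `[r j, d j)`, can be feasibly
assigned to `m` machines (jobs on the same machine have disjoint intervals) if and only
if at every time point `t` at most `m` jobs are active, i.e., satisfy `r j ≤ t < d j`. -/
theorem fixedIntervalScheduling_feasible_iff (m : ℕ) (hm : 1 ≤ m)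
    (J : Type) [Fintype J] (r d : J → ℕ) (hrd : ∀ j : J, r j < d j) :
    (∃ f : J → Fin m, ∀ j j' : J, j ≠ j' → f j = f j' →
        Disjoint (Set.Ico (r j) (d j)) (Set.Ico (r j') (d j'))) ↔
      ∀ t : ℕ, (Finset.univ.filter fun j : J => r j ≤ t ∧ t < d j).card ≤ m := by
  classical
  have : Nonempty (Fin m) := ⟨⟨0, hm⟩⟩
  constructor
  · rintro ⟨f, hf⟩ t
    exact (FixedIntervalScheduling.card_active_le_of_isFeasible (S := univ) (f := f)
      (fun j _ j' _ => hf j j') t).trans_eq (Fintype.card_fin m)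
  · intro h
    obtain ⟨f, hf⟩ := FixedIntervalScheduling.exists_isFeasible_of_card_active_le (M := Fin m)
      hrd univ fun t => (h t).trans_eq (Fintype.card_fin m).symm
    exact ⟨f, fun j j' => hf (mem_coe.2 (mem_univ j)) (mem_coe.2 (mem_univ j'))⟩
end
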